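/- Let T be a self-orthogonal subcategory of an extriangulated category C with enough projectives and injectives. Then T is a generator for T^⊥ if and only if _T X = T^⊥. -/

import Mathlib

open CategoryTheory Opposite Limits

universe v u

namespace ExtTilting

variable (C : Type u) [Category.{v} C] [Preadditive C] [HasFiniteBiproducts C] [HasBinaryBiproducts C]

/-- A Krull-Schmidt category: every object is a finite biproduct of objects
with local endomorphism rings. -/
def IsKrullSchmidt : Prop :=
  ∀ X : C, ∃ (n : ℕ) (f : Fin n → C),
    (∀ i, IsLocalRing (End (f i))) ∧ Nonempty (X ≅ ⨁ f)

/-- An extriangulated category structure (Nakaoka–Palu) on an additive category `C`: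
a biadditive functor `E : Cᵒᵖ × C ⥤ Ab` together with a realization of each
`E`-extension `δ ∈ E(X, A)` by conflations `A ⟶ B ⟶ X`, satisfying (ET1)–(ET4)
and their duals.  `IsConf f g δ` means that the sequence `A ⟶ B ⟶ X` given by
`f, g` realizes the extension `δ`. -/
structure ExtCat where
  /-- the biadditive functor `E : Cᵒᵖ × C ⥤ Ab`; `E(X, A) = (E.obj (op X)).obj A` -/
  E : Cᵒᵖ ⥤ C ⥤ AddCommGrpCat.{v}
  E_additive_right : ∀ X : Cᵒᵖ, (E.obj X).Additive
  E_additive_left : ∀ A : C, (E.flip.obj A).Additive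
  /-- `IsConf f g δ`: the sequence `A ⟶ B ⟶ X` realizes `δ ∈ E(X, A)` -/
  IsConf : ∀ {A B X : C}, (A ⟶ B) → (B ⟶ X) → ((E.obj (op X)).obj A) → Prop
  /-- every extension is realized by some conflation -/
  real_exists : ∀ {A X : C} (δ : (E.obj (op X)).obj A),
    ∃ (B : C) (f : A ⟶ B) (g : B ⟶ X), IsConf f g δ
  /-- any two realizations of the same extension are equivalent -/
  real_unique : ∀ {A B B' X : C} {f : A ⟶ B} {g : B ⟶ X} {f' : A ⟶ B'} {g' : B' ⟶ X}
      {δ : (E.obj (op X)).obj A}, IsConf f g δ → IsConf f' g' δ →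
      ∃ b : B ≅ B', f ≫ b.hom = f' ∧ b.hom ≫ g' = g
  /-- the zero extension is realized by the split sequence -/
  real_zero : ∀ A X : C,
    IsConf (biprod.inl : A ⟶ A ⊞ X) (biprod.snd : A ⊞ X ⟶ X) (0 : (E.obj (op X)).obj A)
  /-- realization of morphisms of extensions -/
  real_map : ∀ {A B X A' B' X' : C} {f : A ⟶ B} {g : B ⟶ X} {f' : A' ⟶ B'} {g' : B' ⟶ X'}
      {δ : (E.obj (op X)).obj A} {δ' : (E.obj (op X')).obj A'}
      (a : A ⟶ A') (c : X ⟶ X'),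
      IsConf f g δ → IsConf f' g' δ' →
      (E.obj (op X)).map a δ = (E.map c.op).app A' δ' →
      ∃ b : B ⟶ B', f ≫ b = a ≫ f' ∧ b ≫ g' = g ≫ c
  /-- (ET3) -/
  et3 : ∀ {A B X A' B' X' : C} {f : A ⟶ B} {g : B ⟶ X} {f' : A' ⟶ B'} {g' : B' ⟶ X'}
      {δ : (E.obj (op X)).obj A} {δ' : (E.obj (op X')).obj A'}
      (a : A ⟶ A') (b : B ⟶ B'),
      IsConf f g δ → IsConf f' g' δ' → f ≫ b = a ≫ f' →
      ∃ c : X ⟶ X', g ≫ c = b ≫ g' ∧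
        (E.obj (op X)).map a δ = (E.map c.op).app A' δ'
  /-- (ET3ᵒᵖ) -/
  et3op : ∀ {A B X A' B' X' : C} {f : A ⟶ B} {g : B ⟶ X} {f' : A' ⟶ B'} {g' : B' ⟶ X'}
      {δ : (E.obj (op X)).obj A} {δ' : (E.obj (op X')).obj A'}
      (b : B ⟶ B') (c : X ⟶ X'),
      IsConf f g δ → IsConf f' g' δ' → g ≫ c = b ≫ g' →
      ∃ a : A ⟶ A', f ≫ b = a ≫ f' ∧
        (E.obj (op X)).map a δ = (E.map c.op).app A' δ'
  /-- (ET4) -/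
  et4 : ∀ {A B D F : C} {Cc : C} {f : A ⟶ B} {f' : B ⟶ D} {g : B ⟶ Cc} {g' : Cc ⟶ F}
      {δ : (E.obj (op D)).obj A} {δ' : (E.obj (op F)).obj B},
      IsConf f f' δ → IsConf g g' δ' →
      ∃ (Ee : C) (d : D ⟶ Ee) (e : Ee ⟶ F) (h' : Cc ⟶ Ee)
        (δ'' : (E.obj (op Ee)).obj A),
        IsConf (f ≫ g) h' δ'' ∧
        IsConf d e ((E.obj (op F)).map f' δ') ∧
        g ≫ h' = f' ≫ d ∧ h' ≫ e = g' ∧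
        (E.map d.op).app A δ'' = δ ∧
        (E.obj (op Ee)).map f δ'' = (E.map e.op).app B δ'
  /-- (ET4ᵒᵖ) -/
  et4op : ∀ {D A B F : C} {Cc : C} {f' : D ⟶ A} {f : A ⟶ B} {g' : F ⟶ B} {g : B ⟶ Cc}
      {δ : (E.obj (op B)).obj D} {δ' : (E.obj (op Cc)).obj F},
      IsConf f' f δ → IsConf g' g δ' →
      ∃ (Ee : C) (d : D ⟶ Ee) (e : Ee ⟶ F) (h' : Ee ⟶ A)
        (δ'' : (E.obj (op Cc)).obj Ee),
        IsConf h' (f ≫ g) δ'' ∧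
        IsConf d e ((E.map g'.op).app D δ) ∧
        d ≫ h' = f' ∧ e ≫ g' = h' ≫ f ∧
        (E.obj (op Cc)).map e δ'' = δ' ∧
        (E.obj (op B)).map d δ = (E.map g.op).app Ee δ''

/-- An extriangulated category with enough projectives and enough injectives,
together with chosen syzygies `Ω` and cosyzygies `Susp` (used to define the
higher extension groups `E^{i+1}(X, A) = E(X, Suspᶦ A)`). -/
structure ECat extends ExtCat C where
  /-- chosen projective cover object -/
  P : C → C
  /-- chosen syzygy -/
  Ω : C → C
  ιP : ∀ X : C, Ω X ⟶ P X
  πP : ∀ X : C, P X ⟶ X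
  δP : ∀ X : C, (E.obj (op X)).obj (Ω X)
  confP : ∀ X : C, IsConf (ιP X) (πP X) (δP X)
  P_projective : ∀ (X A : C) (δ : (E.obj (op (P X))).obj A), δ = 0
  /-- chosen injective hull object -/
  I : C → C
  /-- chosen cosyzygy -/
  Susp : C → C
  ιI : ∀ A : C, A ⟶ I A
  πI : ∀ A : C, I A ⟶ Susp A
  δI : ∀ A : C, (E.obj (op (Susp A))).obj A
  confI : ∀ A : C, IsConf (ιI A) (πI A) (δI A)
  I_injective : ∀ (A X : C) (δ : (E.obj (op X)).obj (I A)), δ = 0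

namespace ECat

variable {C} (𝒞 : ECat C)

/-- The group `E(X, A)` of `E`-extensions. -/
def Eext (X A : C) : AddCommGrpCat.{v} := (𝒞.E.obj (op X)).obj A

/-- `Tri A B X` : there is an `E`-triangle `A ⟶ B ⟶ X`. -/
def Tri (A B X : C) : Prop :=
  ∃ (f : A ⟶ B) (g : B ⟶ X) (δ : 𝒞.Eext X A), 𝒞.IsConf f g δ

/-- projective objects: `E(P, A) = 0` for all `A` -/
def Projective (P : C) : Prop := ∀ (A : C) (δ : 𝒞.Eext P A), δ = 0

/-- injective objects: `E(X, I) = 0` for all `X` -/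
def Injective (I : C) : Prop := ∀ (X : C) (δ : 𝒞.Eext X I), δ = 0

/-- `extVanish i X A` says that the higher extension group
`E^{i+1}(X, A) = E(X, Suspᶦ A)` vanishes. -/
def extVanish (i : ℕ) (X A : C) : Prop := ∀ δ : 𝒞.Eext X (𝒞.Susp^[i] A), δ = 0

/-- `S^⊥ = {Y | E^i(T, Y) = 0 for all i ≥ 1, T ∈ S}` -/
def rperp (S : Set C) : Set C := {Y | ∀ T ∈ S, ∀ i : ℕ, 𝒞.extVanish i T Y}

/-- `^⊥S = {Y | E^i(Y, T) = 0 for all i ≥ 1, T ∈ S}` -/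
def lperp (S : Set C) : Set C := {Y | ∀ T ∈ S, ∀ i : ℕ, 𝒞.extVanish i Y T}

/-- `S^{⊥₁} = {Y | E(T, Y) = 0 for all T ∈ S}` -/
def rperp1 (S : Set C) : Set C := {Y | ∀ T ∈ S, ∀ δ : 𝒞.Eext T Y, δ = 0}

/-- `^{⊥₁}S = {Y | E(Y, T) = 0 for all T ∈ S}` -/
def lperp1 (S : Set C) : Set C := {Y | ∀ T ∈ S, ∀ δ : 𝒞.Eext Y T, δ = 0}

/-- self-orthogonal subcategory: `E^i(T₁, T₂) = 0` for all `i ≥ 1`, `T₁, T₂ ∈ S` -/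
def SelfOrth (S : Set C) : Prop := ∀ T₁ ∈ S, ∀ T₂ ∈ S, ∀ i : ℕ, 𝒞.extVanish i T₁ T₂

/-- `Resol S n A' A` : there is an `E`-triangle sequence
`A' → S_n → ⋯ → S_1 → A` with all `S_i ∈ S`. -/
def Resol (S : Set C) : ℕ → C → C → Prop
  | 0, A', A => A' = A
  | n + 1, A', A => ∃ T K, T ∈ S ∧ 𝒞.Tri K T A ∧ Resol S n A' K

/-- `Coresol S n A A'` : there is an `E`-triangle sequence
`A → S_1 → ⋯ → S_n → A'` with all `S_i ∈ S`. -/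
def Coresol (S : Set C) : ℕ → C → C → Prop
  | 0, A, A' => A = A'
  | n + 1, A, A' => ∃ T K, T ∈ S ∧ 𝒞.Tri A T K ∧ Coresol S n K A'

/-- `Pres S n` : objects `A` admitting an `E`-triangle sequence
`A' → S_n → ⋯ → S_1 → A` with all `S_i ∈ S`. -/
def Pres (S : Set C) (n : ℕ) : Set C := {A | ∃ A', Resol 𝒞 S n A' A}

/-- `Copres S n` : objects `A` admitting an `E`-triangle sequence
`A → S_1 → ⋯ → S_n → A'` with all `S_i ∈ S`. -/
def Copres (S : Set C) (n : ℕ) : Set C := {A | ∃ A', Coresol 𝒞 S n A A'}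

/-- `Š_n` : objects admitting a finite `S`-coresolution `A → S_0 → ⋯ → S_n`. -/
def CheckN (S : Set C) : ℕ → Set C
  | 0 => S
  | n + 1 => {A | ∃ T K, T ∈ S ∧ 𝒞.Tri A T K ∧ K ∈ CheckN S n}

/-- `Ŝ_n` : objects admitting a finite `S`-resolution `S_n → ⋯ → S_0 → A`. -/
def HatN (S : Set C) : ℕ → Set C
  | 0 => S
  | n + 1 => {A | ∃ T K, T ∈ S ∧ 𝒞.Tri K T A ∧ K ∈ HatN S n}

/-- `Š = ⋃ₙ Š_n` -/
def Check (S : Set C) : Set C := ⋃ n : ℕ, CheckN 𝒞 S n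

/-- `Ŝ = ⋃ₙ Ŝ_n` -/
def Hat (S : Set C) : Set C := ⋃ n : ℕ, HatN 𝒞 S n

/-- projective dimension at most `n` : there is a projective resolution of length `n` -/
def projDimLE (A : C) (n : ℕ) : Prop := A ∈ HatN 𝒞 {P | 𝒞.Projective P} n

/-- injective dimension at most `n` -/
def injDimLE (A : C) (n : ℕ) : Prop := A ∈ CheckN 𝒞 {I | 𝒞.Injective I} n

/-- `S` is a generator for `Y` : `S ⊆ Y` and every `A ∈ Y` admits an
`E`-triangle `A' → T → A` with `T ∈ S`, `A' ∈ Y`. -/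
def GeneratorFor (S Y : Set C) : Prop :=
  S ⊆ Y ∧ ∀ A ∈ Y, ∃ A' T, T ∈ S ∧ A' ∈ Y ∧ 𝒞.Tri A' T A

/-- `S` is a cogenerator for `Y` : `S ⊆ Y` and every `A ∈ Y` admits an
`E`-triangle `A → T → A'` with `T ∈ S`, `A' ∈ Y`. -/
def CogeneratorFor (S Y : Set C) : Prop :=
  S ⊆ Y ∧ ∀ A ∈ Y, ∃ A' T, T ∈ S ∧ A' ∈ Y ∧ 𝒞.Tri A T A'

/-- `_S X` : objects `A` admitting an `E`-triangle sequence
`⋯ → T₁ → T₀ → A` with all `Tᵢ ∈ S` and all cocones in `S^⊥`. -/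
def genSub (S : Set C) : Set C :=
  {A | ∃ K T : ℕ → C, (∀ n, T n ∈ S) ∧ (∀ n, K n ∈ 𝒞.rperp S) ∧
    𝒞.Tri (K 0) (T 0) A ∧ ∀ n, 𝒞.Tri (K (n + 1)) (T (n + 1)) (K n)}

/-- `X_S` : objects `A` admitting an `E`-triangle sequence
`A → T₀ → T₁ → ⋯` with all `Tᵢ ∈ S` and all cones in `^⊥S`. -/
def cogenSub (S : Set C) : Set C :=
  {A | ∃ K T : ℕ → C, (∀ n, T n ∈ S) ∧ (∀ n, K n ∈ 𝒞.lperp S) ∧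
    𝒞.Tri A (T 0) (K 0) ∧ ∀ n, 𝒞.Tri (K n) (T (n + 1)) (K (n + 1))}

/-- closed under extensions -/
def ClosedExt (S : Set C) : Prop :=
  ∀ A B X : C, 𝒞.Tri A B X → A ∈ S → X ∈ S → B ∈ S

/-- closed under cones of inflations (resp. of deflations) -/
def ClosedCone (S : Set C) : Prop :=
  ∀ A B X : C, 𝒞.Tri A B X → A ∈ S → B ∈ S → X ∈ S

/-- closed under cocones of deflations -/
def ClosedCocone (S : Set C) : Prop :=
  ∀ A B X : C, 𝒞.Tri A B X → B ∈ S → X ∈ S → A ∈ S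

/-- closed under direct summands -/
def ClosedSummands (S : Set C) : Prop :=
  ∀ A B : C, (A ⊞ B) ∈ S → A ∈ S ∧ B ∈ S

/-- closed under isomorphisms -/
def ClosedIso (S : Set C) : Prop := ∀ A B : C, (A ≅ B) → A ∈ S → B ∈ S

/-- coresolving : contains the injectives, closed under extensions and
cones of deflations -/
def Coresolving (S : Set C) : Prop :=
  (∀ I : C, 𝒞.Injective I → I ∈ S) ∧ 𝒞.ClosedExt S ∧ 𝒞.ClosedCone S

/-- resolving : contains the projectives, closed under extensions and
cocones of inflations -/
def Resolving (S : Set C) : Prop :=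
  (∀ P : C, 𝒞.Projective P → P ∈ S) ∧ 𝒞.ClosedExt S ∧ 𝒞.ClosedCocone S

/-- `g : T ⟶ A` is a right `S`-approximation of `A` -/
def IsRightApprox (S : Set C) {T A : C} (g : T ⟶ A) : Prop :=
  T ∈ S ∧ ∀ T' ∈ S, ∀ h : T' ⟶ A, ∃ k : T' ⟶ T, k ≫ g = h

/-- `g : A ⟶ T` is a left `S`-approximation of `A` -/
def IsLeftApprox (S : Set C) {A T : C} (g : A ⟶ T) : Prop :=
  T ∈ S ∧ ∀ T' ∈ S, ∀ h : A ⟶ T', ∃ k : T ⟶ T', g ≫ k = h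

/-- contravariantly finite : every object has a right `S`-approximation -/
def ContravariantlyFinite (S : Set C) : Prop :=
  ∀ A : C, ∃ (T : C) (g : T ⟶ A), IsRightApprox S g

/-- covariantly finite : every object has a left `S`-approximation -/
def CovariantlyFinite (S : Set C) : Prop :=
  ∀ A : C, ∃ (T : C) (g : A ⟶ T), IsLeftApprox S g

/-- tilting subcategory of projective dimension `n` -/
def IsTilting (S : Set C) (n : ℕ) : Prop :=
  ClosedSummands S ∧ (∀ T ∈ S, 𝒞.projDimLE T n) ∧ 𝒞.GeneratorFor S (𝒞.rperp S)

/-- cotilting subcategory of injective dimension `n` -/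
def IsCotilting (S : Set C) (n : ℕ) : Prop :=
  ClosedSummands S ∧ (∀ T ∈ S, 𝒞.injDimLE T n) ∧ 𝒞.CogeneratorFor S (𝒞.lperp S)

end ECat

end ExtTilting

/-!
Dimension shifting along the chosen conflations `Ω W → P W → W` and `Y → I Y → Σ Y` turns
`E(W, Σⁱ Y) = 0` into `E(Ωⁱ W, Y) = 0`. In that form, for a conflation `A → B → X` every
extension in `E(W, X)` is the pushout of `δP W` along some `Ω W → X`, which lifts to `B` as soon
as `E(Ω W, A) = 0`; so `T^⊥` is closed under cones of deflations, and `_T X ⊆ T^⊥` once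
`T ⊆ T^⊥`. Conversely, iterating the triangles `A' → T → A` supplied by a generator produces the
sequences defining `_T X`, and the first triangle of such a sequence is what a generator needs.
-/

namespace ExtTilting

variable {C : Type u} [Category.{v} C] [Preadditive C] [HasBinaryBiproducts C]

namespace ExtCat

variable (𝒞 : ExtCat C)

lemma map_comp_apply {W X Y Z : C} (a : X ⟶ Y) (b : Y ⟶ Z) (θ : (𝒞.E.obj (op W)).obj X) :
    (𝒞.E.obj (op W)).map (a ≫ b) θ = (𝒞.E.obj (op W)).map b ((𝒞.E.obj (op W)).map a θ) := by
  simp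

lemma map_op_comp_apply {X Y Z A : C} (a : X ⟶ Y) (b : Y ⟶ Z) (θ : (𝒞.E.obj (op Z)).obj A) :
    (𝒞.E.map (a ≫ b).op).app A θ = (𝒞.E.map a.op).app A ((𝒞.E.map b.op).app A θ) := by
  simp

lemma exists_comp_eq_of_map_eq_zero {A B X Y : C} {f : A ⟶ B} {g : B ⟶ X}
    {δ : (𝒞.E.obj (op X)).obj A} (hc : 𝒞.IsConf f g δ) (u : A ⟶ Y)
    (hu : (𝒞.E.obj (op X)).map u δ = 0) : ∃ v : B ⟶ Y, f ≫ v = u := by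
  obtain ⟨b, hb, -⟩ := 𝒞.real_map u (𝟙 X) hc (𝒞.real_zero Y X) (by simp [hu])
  exact ⟨b ≫ biprod.fst, by simp [reassoc_of% hb]⟩

lemma exists_comp_eq_of_map_op_eq_zero {A B X Y : C} {f : A ⟶ B} {g : B ⟶ X}
    {δ : (𝒞.E.obj (op X)).obj A} (hc : 𝒞.IsConf f g δ) (u : Y ⟶ X)
    (hu : (𝒞.E.map u.op).app A δ = 0) : ∃ v : Y ⟶ B, v ≫ g = u := by
  obtain ⟨b, -, hb⟩ := 𝒞.real_map (𝟙 A) u (𝒞.real_zero A Y) hc (by simp [hu])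
  exact ⟨biprod.inr ≫ b, by simp [hb]⟩

end ExtCat

namespace ECat

variable (𝒞 : ECat C)

def extZero (X A : C) : Prop := ∀ δ : (𝒞.E.obj (op X)).obj A, δ = 0

lemma exists_eq_map_op_δI {X A : C} (θ : (𝒞.E.obj (op X)).obj A) :
    ∃ s : X ⟶ 𝒞.Susp A, θ = (𝒞.E.map s.op).app A (𝒞.δI A) := by
  obtain ⟨B, f, g, hc⟩ := 𝒞.real_exists θ
  obtain ⟨v, hv⟩ := 𝒞.exists_comp_eq_of_map_eq_zero hc (𝒞.ιI A) (𝒞.I_injective A X _)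
  obtain ⟨s, -, hs⟩ := 𝒞.et3 (𝟙 A) v hc (𝒞.confI A) (by simp [hv])
  exact ⟨s, by simpa using hs⟩

lemma exists_eq_map_δP {X A : C} (θ : (𝒞.E.obj (op X)).obj A) :
    ∃ a : 𝒞.Ω X ⟶ A, θ = (𝒞.E.obj (op X)).map a (𝒞.δP X) := by
  obtain ⟨B, f, g, hc⟩ := 𝒞.real_exists θ
  obtain ⟨v, hv⟩ := 𝒞.exists_comp_eq_of_map_op_eq_zero hc (𝒞.πP X) (𝒞.P_projective X A _)
  obtain ⟨a, -, ha⟩ := 𝒞.et3op v (𝟙 X) (𝒞.confP X) hc (by simp [hv])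
  exact ⟨a, by simpa using ha.symm⟩

lemma extZero_susp_of_extZero_syzygy {X A : C} (h : 𝒞.extZero (𝒞.Ω X) A) :
    𝒞.extZero X (𝒞.Susp A) := by
  intro ε
  obtain ⟨a, rfl⟩ := 𝒞.exists_eq_map_δP ε
  obtain ⟨v, rfl⟩ := 𝒞.exists_comp_eq_of_map_op_eq_zero (𝒞.confI A) a (h _)
  rw [ExtCat.map_comp_apply, 𝒞.I_injective A X ((𝒞.E.obj (op X)).map v (𝒞.δP X)), map_zero]

lemma extZero_syzygy_of_extZero_susp {X A : C} (h : 𝒞.extZero X (𝒞.Susp A)) :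
    𝒞.extZero (𝒞.Ω X) A := by
  intro θ
  obtain ⟨s, rfl⟩ := 𝒞.exists_eq_map_op_δI θ
  obtain ⟨v, rfl⟩ := 𝒞.exists_comp_eq_of_map_eq_zero (𝒞.confP X) s (h _)
  rw [ExtCat.map_op_comp_apply, 𝒞.P_projective X A ((𝒞.E.map v.op).app A (𝒞.δI A)), map_zero]

lemma extZero_syzygy_iterate_iff (i : ℕ) (X A : C) :
    𝒞.extZero (𝒞.Ω^[i] X) A ↔ 𝒞.extZero X (𝒞.Susp^[i] A) := by
  induction i generalizing A with
  | zero => rfl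
  | succ i ih =>
    rw [Function.iterate_succ_apply', Function.iterate_succ_apply, ← ih]
    exact ⟨𝒞.extZero_susp_of_extZero_syzygy, 𝒞.extZero_syzygy_of_extZero_susp⟩

lemma extZero_of_isConf {A B X W : C} {f : A ⟶ B} {g : B ⟶ X} {δ : (𝒞.E.obj (op X)).obj A}
    (hc : 𝒞.IsConf f g δ) (hB : 𝒞.extZero W B) (hA : 𝒞.extZero (𝒞.Ω W) A) :
    𝒞.extZero W X := by
  intro ε
  obtain ⟨a, rfl⟩ := 𝒞.exists_eq_map_δP ε
  obtain ⟨v, rfl⟩ := 𝒞.exists_comp_eq_of_map_op_eq_zero hc a (hA _)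
  rw [ExtCat.map_comp_apply, hB ((𝒞.E.obj (op W)).map v (𝒞.δP W)), map_zero]

lemma closedCone_rperp (S : Set C) : 𝒞.ClosedCone (𝒞.rperp S) := by
  rintro A B X ⟨f, g, δ, hc⟩ hA hB T hT i
  refine (𝒞.extZero_syzygy_iterate_iff i T X).1 (𝒞.extZero_of_isConf hc ?_ ?_)
  · exact (𝒞.extZero_syzygy_iterate_iff i T B).2 (hB T hT i)
  · rw [← Function.iterate_succ_apply' 𝒞.Ω]
    exact (𝒞.extZero_syzygy_iterate_iff (i + 1) T A).2 (hA T hT (i + 1))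

variable {𝒞} in
lemma SelfOrth.subset_rperp {S : Set C} (h : 𝒞.SelfOrth S) : S ⊆ 𝒞.rperp S :=
  fun _ hT₂ T₁ hT₁ i => h T₁ hT₁ _ hT₂ i

lemma genSub_subset_rperp {S : Set C} (hS : S ⊆ 𝒞.rperp S) : 𝒞.genSub S ⊆ 𝒞.rperp S := by
  rintro A ⟨K, T, hT, hK, h0, -⟩
  exact 𝒞.closedCone_rperp S _ _ _ h0 (hK 0) (hS (hT 0))

lemma subset_genSub_of_generatorFor {S Y : Set C} (hY : Y ⊆ 𝒞.rperp S)
    (hgen : 𝒞.GeneratorFor S Y) : Y ⊆ 𝒞.genSub S := by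
  intro A hA
  choose next T hT hnext hTri using fun a : Y => hgen.2 a a.2
  let step : Y → Y := fun a => ⟨next a, hnext a⟩
  let x : ℕ → Y := fun n => step^[n] ⟨A, hA⟩
  have hx : ∀ n, x (n + 1) = step (x n) := fun n => Function.iterate_succ_apply' step n _
  refine ⟨fun n => next (x n), fun n => T (x n), fun n => hT _, fun n => hY (hnext _),
    hTri _, fun n => ?_⟩
  simpa only [hx] using hTri (step (x n))

lemma generatorFor_rperp_of_genSub_eq {S : Set C} (hso : 𝒞.SelfOrth S)
    (h : 𝒞.genSub S = 𝒞.rperp S) : 𝒞.GeneratorFor S (𝒞.rperp S) := by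
  refine ⟨hso.subset_rperp, fun A hA => ?_⟩
  obtain ⟨K, T, hT, hK, h0, -⟩ := h.symm ▸ hA
  exact ⟨K 0, T 0, hT 0, hK 0, h0⟩

end ECat

end ExtTilting

namespace ExtTilting
open ECat
variable {C : Type u} [Category.{v} C] [Preadditive C]
  [HasFiniteBiproducts C] [HasBinaryBiproducts C]

theorem stmt6 (𝒞 : ECat C) (𝒯 : Set C) (hso : 𝒞.SelfOrth 𝒯) :
    𝒞.GeneratorFor 𝒯 (𝒞.rperp 𝒯) ↔ 𝒞.genSub 𝒯 = 𝒞.rperp 𝒯 :=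
  ⟨fun hgen => (𝒞.genSub_subset_rperp hgen.1).antisymm
      (𝒞.subset_genSub_of_generatorFor subset_rfl hgen),
    𝒞.generatorFor_rperp_of_genSub_eq hso⟩

end ExtTilting
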